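/- Let f ∈ m² be reduced, let I be a zero-dimensional ideal with I^{ea}(f) ⊆ I ⊆ m, and let 0 ≤ α ≤ 1 be rational. Then (1+α)²·dim_ℂ(R/I) ≤ γ_α(f;I) ≤ (dim_ℂ(R/I) + α)². -/

import Mathlib

open MvPowerSeries

noncomputable section

/-- `R = ℂ⟦x,y⟧`, the ring of formal power series in two variables over `ℂ`. -/
abbrev R2 : Type := MvPowerSeries (Fin 2) ℂ

/-- The maximal ideal `m = ⟨x, y⟩` of `ℂ⟦x,y⟧`. -/
def mm : Ideal R2 := Ideal.span {X 0, X 1}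

/-- `dim_ℂ R/I` as an extended natural number. -/
def edim (I : Ideal R2) : ℕ∞ := Cardinal.toENat (Module.rank ℂ (R2 ⧸ I))

/-- `dim_ℂ R/I` as a natural number (junk value `0` when infinite). -/
def fdim (I : Ideal R2) : ℕ := (edim I).toNat

/-- The formal partial derivative of a power series with respect to the `i`-th variable. -/
def pd (i : Fin 2) (f : R2) : R2 :=
  fun d => ((d i : ℂ) + 1) * coeff (R := ℂ) (d + Finsupp.single i 1) f

/-- The Tjurina ideal `I^{ea}(f) = ⟨∂f/∂x, ∂f/∂y, f⟩`. -/
def Tjurina (f : R2) : Ideal R2 := Ideal.span {pd 0 f, pd 1 f, f}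

/-- The intersection multiplicity `i(f,g) = dim_ℂ R/⟨f,g⟩ ∈ ℕ ∪ {∞}`. -/
def interNum (f g : R2) : ℕ∞ := edim (Ideal.span {f, g})

/-- `λ_α(f;I,g) = (α·i(f,g) + (1−α)·dim_ℂ(R/I))² / (i(f,g) − dim_ℂ(R/I))`. -/
def lam (α : ℚ) (f : R2) (I : Ideal R2) (g : R2) : ℝ :=
  ((α : ℝ) * ((interNum f g).toNat : ℝ) + (1 - (α : ℝ)) * (fdim I : ℝ)) ^ 2 /
    (((interNum f g).toNat : ℝ) - (fdim I : ℝ))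

/-- `γ_α(f;I) = max({(1+α)²·dim_ℂ(R/I)} ∪ {λ_α(f;I,g) : g ∈ I, i(f,g) ≤ 2·dim_ℂ(R/I)})`. -/
def gam (α : ℚ) (f : R2) (I : Ideal R2) : ℝ :=
  sSup ({(1 + (α : ℝ)) ^ 2 * (fdim I : ℝ)} ∪
    {x : ℝ | ∃ g ∈ I, interNum f g ≤ 2 * edim I ∧ x = lam α f I g})

/-- A complete intersection ideal: zero-dimensional and generated by two elements. -/
def IsCI (I : Ideal R2) : Prop := edim I < ⊤ ∧ ∃ a b : R2, I = Ideal.span {a, b}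

/-- `γ_α^{ea}(f) = max({0} ∪ {γ_α(f;I) : I a complete intersection ideal,
`I^{ea}(f) ⊆ I ⊆ m`})`. -/
def gamEA (α : ℚ) (f : R2) : ℝ :=
  sSup ({0} ∪ {x : ℝ | ∃ I : Ideal R2, IsCI I ∧ Tjurina f ≤ I ∧ I ≤ mm ∧ x = gam α f I})


/-!
Every `g ∈ I` entering `γ_α(f;I)` has `⟨f,g⟩ ⊆ I`, so `d ≤ i(f,g) ≤ 2d` with `d = dim_ℂ R/I ≥ 1`.
Writing `i(f,g) = d + t` with `1 ≤ t ≤ d`, the numerator of `λ_α` is `(d + αt)²`, and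
`(d + α)² t - (d + αt)² = (t - 1)(d² - α²t) ≥ 0`. The term `(1+α)² d` is bounded the same way,
since `(d + α)² - (1 + α)² d = (d - 1)(d - α²)`; when `i(f,g) = d`, `λ_α` is `0` by Lean's
convention `x / 0 = 0`.
-/

lemma edim_antitone : Antitone edim := fun _ _ h =>
  Cardinal.toENat.monotone' <| LinearMap.rank_le_of_surjective
    (Ideal.Quotient.factorₐ ℂ h).toLinearMap (Ideal.Quotient.factor_surjective h)

lemma mm_ne_top : mm ≠ ⊤ := by
  have hker : mm ≤ RingHom.ker (constantCoeff (σ := Fin 2) (R := ℂ)) := by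
    rw [mm, Ideal.span_le]
    rintro g (rfl | rfl) <;> simp [RingHom.mem_ker]
  intro htop
  simpa [RingHom.mem_ker] using hker (htop ▸ Submodule.mem_top : (1 : R2) ∈ mm)

lemma one_le_edim_of_le_mm {I : Ideal R2} (hIm : I ≤ mm) : 1 ≤ edim I := by
  have : Nontrivial (R2 ⧸ I) :=
    Ideal.Quotient.nontrivial_iff.mpr (ne_top_of_le_ne_top mm_ne_top hIm)
  simpa [edim] using Cardinal.toENat.monotone'
    (Cardinal.one_le_iff_pos.mpr (rank_pos (R := ℂ) (M := R2 ⧸ I)))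

lemma one_add_sq_mul_le_add_sq {d α : ℝ} (hd : 1 ≤ d) (hα0 : 0 ≤ α) (hα1 : α ≤ 1) :
    (1 + α) ^ 2 * d ≤ (d + α) ^ 2 := by
  have hα2 : α ^ 2 ≤ d := by nlinarith
  have hfactor : (d + α) ^ 2 - (1 + α) ^ 2 * d = (d - 1) * (d - α ^ 2) := by ring
  linarith [mul_nonneg (sub_nonneg.mpr hd) (sub_nonneg.mpr hα2)]

lemma sq_div_sub_le_add_sq {d n : ℕ} {α : ℝ} (hdn : d ≤ n) (hn : n ≤ 2 * d)
    (hα0 : 0 ≤ α) (hα1 : α ≤ 1) :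
    (α * n + (1 - α) * d) ^ 2 / ((n : ℝ) - d) ≤ ((d : ℝ) + α) ^ 2 := by
  rcases hdn.eq_or_lt with rfl | hlt
  · rw [sub_self, div_zero]
    positivity
  set t : ℝ := (n : ℝ) - d
  have ht1 : 1 ≤ t := by
    have : (d : ℝ) + 1 ≤ n := by exact_mod_cast hlt
    linarith
  have htd : t ≤ d := by
    have : (n : ℝ) ≤ 2 * d := by exact_mod_cast hn
    linarith
  have hnum : α * n + (1 - α) * d = d + α * t := by ring
  have hfactor : ((d : ℝ) + α) ^ 2 * t - (d + α * t) ^ 2 = (t - 1) * (d ^ 2 - α ^ 2 * t) := by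
    ring
  have hpos : 0 ≤ (d : ℝ) ^ 2 - α ^ 2 * t := by
    have hα2 : α ^ 2 ≤ 1 := by nlinarith
    nlinarith
  rw [hnum, div_le_iff₀ (by linarith)]
  linarith [mul_nonneg (sub_nonneg.mpr ht1) hpos]

lemma lam_le_of_mem {α : ℚ} {f g : R2} {I : Ideal R2} (hI0 : edim I < ⊤)
    (hfI : f ∈ I) (hgI : g ∈ I) (hfg : interNum f g ≤ 2 * edim I) (hα0 : 0 ≤ α) (hα1 : α ≤ 1) :
    lam α f I g ≤ ((fdim I : ℝ) + α) ^ 2 := by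
  have hspan : Ideal.span {f, g} ≤ I := by
    rw [Ideal.span_le]
    rintro h (rfl | rfl) <;> assumption
  have hfin : interNum f g ≠ ⊤ :=
    ne_top_of_le_ne_top (WithTop.mul_ne_top (by decide) hI0.ne) hfg
  have hdn : fdim I ≤ (interNum f g).toNat := ENat.toNat_le_toNat (edim_antitone hspan) hfin
  have hn : (interNum f g).toNat ≤ 2 * fdim I := by
    simpa [fdim] using ENat.toNat_le_toNat hfg (WithTop.mul_ne_top (by decide) hI0.ne)
  exact sq_div_sub_le_add_sq hdn hn (by exact_mod_cast hα0) (by exact_mod_cast hα1)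

theorem stmt2_general (f : R2)
    (I : Ideal R2) (hI0 : edim I < ⊤) (hTI : Tjurina f ≤ I) (hIm : I ≤ mm)
    (α : ℚ) (hα0 : 0 ≤ α) (hα1 : α ≤ 1) :
    (1 + (α : ℝ)) ^ 2 * (fdim I : ℝ) ≤ gam α f I ∧
    gam α f I ≤ ((fdim I : ℝ) + α) ^ 2 := by
  have hd : 1 ≤ fdim I := by
    simpa [fdim] using ENat.toNat_le_toNat (one_le_edim_of_le_mm hIm) hI0.ne
  have hfI : f ∈ I := hTI (Ideal.subset_span (by simp))
  set S : Set ℝ := {(1 + (α : ℝ)) ^ 2 * (fdim I : ℝ)} ∪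
    {x : ℝ | ∃ g ∈ I, interNum f g ≤ 2 * edim I ∧ x = lam α f I g}
  have hbound : ∀ x ∈ S, x ≤ ((fdim I : ℝ) + α) ^ 2 := by
    rintro x (rfl | ⟨g, hgI, hfg, rfl⟩)
    · exact one_add_sq_mul_le_add_sq (by exact_mod_cast hd) (by exact_mod_cast hα0)
        (by exact_mod_cast hα1)
    · exact lam_le_of_mem hI0 hfI hgI hfg hα0 hα1
  have hmem : (1 + (α : ℝ)) ^ 2 * (fdim I : ℝ) ∈ S := Or.inl rfl
  exact ⟨le_csSup ⟨_, hbound⟩ hmem, csSup_le ⟨_, hmem⟩ hbound⟩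

/-- For `f ∈ m²` reduced, `I` zero-dimensional with `I^{ea}(f) ⊆ I ⊆ m`,
and rational `0 ≤ α ≤ 1`, one has `(1+α)²·dim_ℂ(R/I) ≤ γ_α(f;I) ≤ (dim_ℂ(R/I) + α)²`. -/
theorem stmt2 (f : R2) (hf2 : f ∈ mm ^ 2) (hred : Squarefree f)
    (I : Ideal R2) (hI0 : edim I < ⊤) (hTI : Tjurina f ≤ I) (hIm : I ≤ mm)
    (α : ℚ) (hα0 : 0 ≤ α) (hα1 : α ≤ 1) :
    (1 + (α : ℝ)) ^ 2 * (fdim I : ℝ) ≤ gam α f I ∧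
    gam α f I ≤ ((fdim I : ℝ) + α) ^ 2 :=
  stmt2_general f I hI0 hTI hIm α hα0 hα1

end
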